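/- (Representation (rep1).) Let z, z_0 ∈ ℂ and let (Y_j)_{j ≥ −1} be a solution of the matrix equation (1) at z. Then for every k ≥ 0 there exist complex n×n matrices C_k¹ and C_k² such that for all j ≥ k+1: Y_j = Q_j(z_0)C_k¹ + P_j(z_0)C_k² + (z − z_0)·Σ_{i=k}^{j−1} ( P_j(z_0)Q⁺_i(z_0) − Q_j(z_0)P⁺_i(z_0) )·Y_i. -/

import Mathlib

open Matrix Filter
open scoped BigOperators ENNReal

/-- Square `n × n` complex matrices. -/
abbrev Mat (n : ℕ) := Matrix (Fin n) (Fin n) ℂ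

/-- `Alo b j` is the coefficient `A_{j,j-1}` (so `Alo b 0 = A_{0,-1} = -E` and
`Alo b (j+1) = A_{j+1,j} = b j`). -/
def Alo {n : ℕ} (b : ℕ → Mat n) : ℕ → Mat n
  | 0 => -1
  | j + 1 => b j

/-- `Aup a j` is the coefficient `A_{j-1,j}` (so `Aup a 0 = A_{-1,0} = -E` and
`Aup a (j+1) = A_{j,j+1} = a j`). -/
def Aup {n : ℕ} (a : ℕ → Mat n) : ℕ → Mat n
  | 0 => -1
  | j + 1 => a j

/-- Matrix equation (1).  Sequences are indexed by `ℕ`, where index `k` represents the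
paper index `k - 1` (so index `0` is the paper index `-1`).  Here `d j = A_{j,j}`,
`a j = A_{j,j+1}`, `b j = A_{j+1,j}`. -/
def SolEq1 {n : ℕ} (d a b : ℕ → Mat n) (z : ℂ) (Y : ℕ → Mat n) : Prop :=
  ∀ j : ℕ, Alo b j * Y j + d j * Y (j + 1) + a j * Y (j + 2) = z • Y (j + 1)

/-- Matrix equation (2), with the same index shift. -/
def SolEq2 {n : ℕ} (d a b : ℕ → Mat n) (z : ℂ) (Y : ℕ → Mat n) : Prop :=
  ∀ j : ℕ, Y j * Aup a j + Y (j + 1) * d j + Y (j + 2) * b j = z • Y (j + 1)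

/-- Vector equation (1v), with the same index shift. -/
def SolEq1v {n : ℕ} (d a b : ℕ → Mat n) (z : ℂ) (u : ℕ → Fin n → ℂ) : Prop :=
  ∀ j : ℕ, Alo b j *ᵥ u j + d j *ᵥ u (j + 1) + a j *ᵥ u (j + 2) = z • u (j + 1)

/-- Vector equation (2v) for the row vectors `v_j^*`, with the same index shift. -/
def SolEq2v {n : ℕ} (d a b : ℕ → Mat n) (z : ℂ) (v : ℕ → Fin n → ℂ) : Prop :=
  ∀ j : ℕ, star (v j) ᵥ* Aup a j + star (v (j + 1)) ᵥ* d j + star (v (j + 2)) ᵥ* b j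
    = z • star (v (j + 1))

/-!
Pair a solution `V` of (2) at `z₀` with a solution `Y` of (1) at `z` through the Wronskian
`W(V, Y)_j = V_{j+1} A_{j+1,j} Y_j - V_j A_{j,j+1} Y_{j+1}`. Green's identity says that
`W(V, Y)_j - W(V, Y)_{j-1} = (z₀ - z) V_j Y_j`, so the Wronskian is constant when `z = z₀` and
telescopes in general. The constant Wronskians of the fundamental solutions, read off at `j = -1`,
say that the block matrix
`[[P⁺_j A_{j,j-1}, -P⁺_{j-1} A_{j-1,j}], [-Q⁺_j A_{j,j-1}, Q⁺_{j-1} A_{j-1,j}]]` is a left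
inverse of `[[Q_{j-1}, P_{j-1}], [Q_j, P_j]]`. As a right inverse it gives, for every sequence `Y`,
`Y_j = Q_j W(P⁺, Y)_{j-1} - P_j W(Q⁺, Y)_{j-1}`; telescoping both Wronskians from `k - 1` to
`j - 1` yields the representation with `C¹_k = W(P⁺, Y)_{k-1}` and `C²_k = -W(Q⁺, Y)_{k-1}`.
-/

-- `wronskian a b V Y j` is `W(V, Y)_{j-1}`, in line with the index shift of `SolEq1`.
def wronskian {n : ℕ} (a b V Y : ℕ → Mat n) (j : ℕ) : Mat n :=
  V (j + 1) * Alo b j * Y j - V j * Aup a j * Y (j + 1)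

section Wronskian

variable {n : ℕ} {d a b : ℕ → Mat n} {z z0 : ℂ} {V Y : ℕ → Mat n}

lemma wronskian_zero :
    wronskian a b V Y 0 = V 0 * Y 1 - V 1 * Y 0 := by
  simp only [wronskian, Alo, Aup, mul_neg, mul_one, neg_mul, sub_neg_eq_add, neg_add_eq_sub]

lemma wronskian_succ_sub (hV : SolEq2 d a b z0 V) (hY : SolEq1 d a b z Y) (j : ℕ) :
    wronskian a b V Y (j + 1) - wronskian a b V Y j = (z0 - z) • (V (j + 1) * Y (j + 1)) := by
  have expand : wronskian a b V Y (j + 1) - wronskian a b V Y j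
      = (V j * Aup a j + V (j + 1) * d j + V (j + 2) * b j) * Y (j + 1)
        - V (j + 1) * (Alo b j * Y j + d j * Y (j + 1) + a j * Y (j + 2)) := by
    simp only [wronskian, Alo, Aup]
    noncomm_ring
  rw [expand, hV j, hY j, smul_mul_assoc, mul_smul_comm, ← sub_smul]

lemma wronskian_eq_wronskian_zero (hV : SolEq2 d a b z0 V) (hY : SolEq1 d a b z0 Y) (j : ℕ) :
    wronskian a b V Y j = wronskian a b V Y 0 := by
  induction j with
  | zero => rfl
  | succ j ih => rw [← ih, ← sub_eq_zero, wronskian_succ_sub hV hY, sub_self, zero_smul]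

lemma wronskian_eq_sub_sum (hV : SolEq2 d a b z0 V) (hY : SolEq1 d a b z Y) {k j : ℕ}
    (hkj : k ≤ j) :
    wronskian a b V Y j
      = wronskian a b V Y k - (z - z0) • ∑ i ∈ Finset.Ico k j, V (i + 1) * Y (i + 1) := by
  have telescope := Finset.sum_Ico_sub (wronskian a b V Y) hkj
  simp_rw [wronskian_succ_sub hV hY, ← Finset.smul_sum] at telescope
  rw [← neg_sub z0 z, neg_smul, sub_neg_eq_add, telescope, add_sub_cancel]

lemma mul_wronskian_sub_mul_wronskian {P Q Pp Qp : ℕ → Mat n} {j : ℕ}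
    (hPpQ : wronskian a b Pp Q j = 1) (hPpP : wronskian a b Pp P j = 0)
    (hQpQ : wronskian a b Qp Q j = 0) (hQpP : wronskian a b Qp P j = -1) (Y : ℕ → Mat n) :
    Q (j + 1) * wronskian a b Pp Y j - P (j + 1) * wronskian a b Qp Y j = Y (j + 1) := by
  have left_inv :
      fromBlocks (Pp (j + 1) * Alo b j) (-(Pp j * Aup a j))
          (-(Qp (j + 1) * Alo b j)) (Qp j * Aup a j)
        * fromBlocks (Q j) (P j) (Q (j + 1)) (P (j + 1)) = 1 := by
    rw [fromBlocks_multiply, ← fromBlocks_one, fromBlocks_inj]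
    refine ⟨?_, ?_, ?_, ?_⟩
    · rw [← hPpQ, wronskian]; noncomm_ring
    · rw [← hPpP, wronskian]; noncomm_ring
    · rw [← neg_zero, ← hQpQ, wronskian]; noncomm_ring
    · rw [← neg_neg (1 : Mat n), ← hQpP, wronskian]; noncomm_ring
  have right_inv := mul_eq_one_comm.mp left_inv
  rw [fromBlocks_multiply, ← fromBlocks_one, fromBlocks_inj] at right_inv
  obtain ⟨-, -, hAlo, hAup⟩ := right_inv
  calc Q (j + 1) * wronskian a b Pp Y j - P (j + 1) * wronskian a b Qp Y j
      = (Q (j + 1) * (Pp (j + 1) * Alo b j) + P (j + 1) * -(Qp (j + 1) * Alo b j)) * Y j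
        + (Q (j + 1) * -(Pp j * Aup a j) + P (j + 1) * (Qp j * Aup a j)) * Y (j + 1) := by
        simp only [wronskian]; noncomm_ring
    _ = Y (j + 1) := by rw [hAlo, hAup, zero_mul, zero_add, one_mul]

end Wronskian

theorem statement7_general {n : ℕ} (d a b : ℕ → Mat n) (z z0 : ℂ)
    (P Q Pp Qp : ℕ → Mat n)
    (hP : SolEq1 d a b z0 P) (hQ : SolEq1 d a b z0 Q)
    (hPp : SolEq2 d a b z0 Pp) (hQp : SolEq2 d a b z0 Qp)
    (hP0 : P 0 = 1) (hP1 : P 1 = 0) (hQ0 : Q 0 = 0) (hQ1 : Q 1 = 1)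
    (hPp0 : Pp 0 = 1) (hPp1 : Pp 1 = 0) (hQp0 : Qp 0 = 0) (hQp1 : Qp 1 = 1)
    (Y : ℕ → Mat n) (hY : SolEq1 d a b z Y) (k : ℕ) :
    ∃ C1 C2 : Mat n, ∀ j : ℕ, k + 1 ≤ j →
      Y (j + 1) = Q (j + 1) * C1 + P (j + 1) * C2 +
        (z - z0) • ∑ i ∈ Finset.Ico k j,
          (P (j + 1) * Qp (i + 1) - Q (j + 1) * Pp (i + 1)) * Y (i + 1) := by
  refine ⟨wronskian a b Pp Y k, -wronskian a b Qp Y k, fun j hj => ?_⟩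
  have hPpQ : wronskian a b Pp Q j = 1 := by
    rw [wronskian_eq_wronskian_zero hPp hQ, wronskian_zero, hPp0, hPp1, hQ0, hQ1]; simp
  have hPpP : wronskian a b Pp P j = 0 := by
    rw [wronskian_eq_wronskian_zero hPp hP, wronskian_zero, hPp0, hPp1, hP0, hP1]; simp
  have hQpQ : wronskian a b Qp Q j = 0 := by
    rw [wronskian_eq_wronskian_zero hQp hQ, wronskian_zero, hQp0, hQp1, hQ0, hQ1]; simp
  have hQpP : wronskian a b Qp P j = -1 := by
    rw [wronskian_eq_wronskian_zero hQp hP, wronskian_zero, hQp0, hQp1, hP0, hP1]; simp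
  have hkj : k ≤ j := by omega
  rw [← mul_wronskian_sub_mul_wronskian hPpQ hPpP hQpQ hQpP Y,
    wronskian_eq_sub_sum hPp hY hkj, wronskian_eq_sub_sum hQp hY hkj]
  simp only [sub_mul, Finset.sum_sub_distrib, mul_assoc, ← Finset.mul_sum, smul_sub,
    mul_sub, mul_neg, mul_smul_comm]
  abel

/-- representation (rep1): any solution `Y` of equation (1) at `z` can be
represented via the fundamental solutions at `z₀`. -/
theorem statement7 {n : ℕ} (hn : 1 ≤ n) (d a b : ℕ → Mat n)
    (ha : ∀ j, IsUnit (a j)) (hb : ∀ j, IsUnit (b j)) (z z0 : ℂ)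
    (P Q Pp Qp : ℕ → Mat n)
    (hP : SolEq1 d a b z0 P) (hQ : SolEq1 d a b z0 Q)
    (hPp : SolEq2 d a b z0 Pp) (hQp : SolEq2 d a b z0 Qp)
    (hP0 : P 0 = 1) (hP1 : P 1 = 0) (hQ0 : Q 0 = 0) (hQ1 : Q 1 = 1)
    (hPp0 : Pp 0 = 1) (hPp1 : Pp 1 = 0) (hQp0 : Qp 0 = 0) (hQp1 : Qp 1 = 1)
    (Y : ℕ → Mat n) (hY : SolEq1 d a b z Y) (k : ℕ) :
    ∃ C1 C2 : Mat n, ∀ j : ℕ, k + 1 ≤ j →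
      Y (j + 1) = Q (j + 1) * C1 + P (j + 1) * C2 +
        (z - z0) • ∑ i ∈ Finset.Ico k j,
          (P (j + 1) * Qp (i + 1) - Q (j + 1) * Pp (i + 1)) * Y (i + 1) :=
  statement7_general d a b z z0 P Q Pp Qp hP hQ hPp hQp hP0 hP1 hQ0 hQ1 hPp0 hPp1 hQp0 hQp1 Y hY k
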